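/- Let H be a graph on vertex set V and let Γ be the star with center c ∉ V and leaf set V. Let G be the weighted graph on V ∪ {c} with edge set E(H) (each such edge having weight d_Γ = 2) and c isolated. If D ⊆ V is a dominating set of H, then adding the edge set E_D = {(c,v) : v ∈ D} (each of weight 1) yields a graph G+E_D with dilation at most 3 with respect to Γ: d_{G+E_D}(c,v) ≤ 3 for all v ∈ V and d_{G+E_D}(u,v) ≤ 6 for all u,v ∈ V. -/
import Mathlib


open SimpleGraph

/-- The weight of a walk in `G`, where each edge `uv` is weighted by the
shortest-path distance `Γ.dist u v` in the (unweighted) graph `Γ`. -/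
noncomputable def walkWeight {V : Type*} (Γ G : SimpleGraph V) :
    {x y : V} → G.Walk x y → ℕ
  | x, _, .cons (v := v) _ p => Γ.dist x v + walkWeight Γ G p
  | _, _, .nil => 0

/-- Weighted shortest-path distance in `G`, with edge weights `Γ.dist`;
`⊤` if there is no walk. -/
noncomputable def wdist {V : Type*} (Γ G : SimpleGraph V) (x y : V) : ℕ∞ :=
  ⨅ p : G.Walk x y, (walkWeight Γ G p : ℕ∞)

lemma walkWeight_cons {V : Type*} (Γ G : SimpleGraph V) {x v y : V}
    (h : G.Adj x v) (p : G.Walk v y) :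
    walkWeight Γ G (Walk.cons h p) = Γ.dist x v + walkWeight Γ G p := rfl

lemma walkWeight_nil {V : Type*} (Γ G : SimpleGraph V) {x : V} :
    walkWeight Γ G (Walk.nil : G.Walk x x) = 0 := rfl

lemma walkWeight_append {V : Type*} (Γ G : SimpleGraph V) {x y z : V}
    (p : G.Walk x y) (q : G.Walk y z) :
    walkWeight Γ G (p.append q) = walkWeight Γ G p + walkWeight Γ G q := by
  induction p with
  | nil => simp [walkWeight_nil]
  | cons h p ih => simp [Walk.cons_append, walkWeight_cons, ih, Nat.add_assoc]

lemma wdist_le {V : Type*} (Γ G : SimpleGraph V) {x y : V} (p : G.Walk x y)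
    {n : ℕ} (h : walkWeight Γ G p ≤ n) : wdist Γ G x y ≤ (n : ℕ∞) := by
  refine le_trans (iInf_le _ p) ?_
  exact_mod_cast h

/-- Star construction: if `D` is a dominating set of `H` and we add the edges from the
star center `c = none` to `D`, the resulting graph has dilation at most `3`:
distance at most `3` from `c` to every vertex and at most `6` between any two
vertices of `H`. -/
theorem dominating_set_gives_dilation_three {V : Type*} [Fintype V]
    (H : SimpleGraph V) (D : Set V)
    (hdom : ∀ v : V, v ∈ D ∨ ∃ u ∈ D, H.Adj u v)
    (Γ G S : SimpleGraph (Option V))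
    (hΓ : ∀ x y : Option V, Γ.Adj x y ↔ x ≠ y ∧ (x = none ∨ y = none))
    (hG : ∀ x y : Option V, G.Adj x y ↔
      ∃ u v : V, x = some u ∧ y = some v ∧ H.Adj u v)
    (hS : ∀ x y : Option V, S.Adj x y ↔
      (x = none ∧ ∃ v ∈ D, y = some v) ∨ (y = none ∧ ∃ v ∈ D, x = some v)) :
    (∀ v : V, wdist Γ (G ⊔ S) none (some v) ≤ 3) ∧
    (∀ u v : V, wdist Γ (G ⊔ S) (some u) (some v) ≤ 6) := by
  -- distances in the star
  have hd1 : ∀ v : V, Γ.dist none (some v) ≤ 1 := by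
    intro v
    have hadj : Γ.Adj none (some v) := (hΓ _ _).2 ⟨by simp, Or.inl rfl⟩
    have := Γ.dist_le (Walk.cons hadj Walk.nil)
    simpa using this
  have hd1' : ∀ v : V, Γ.dist (some v) none ≤ 1 := by
    intro v
    have hadj : Γ.Adj (some v) none := (hΓ _ _).2 ⟨by simp, Or.inr rfl⟩
    have := Γ.dist_le (Walk.cons hadj Walk.nil)
    simpa using this
  have hd2 : ∀ u v : V, Γ.dist (some u) (some v) ≤ 2 := by
    intro u v
    have h1 : Γ.Adj (some u) none := (hΓ _ _).2 ⟨by simp, Or.inr rfl⟩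
    have h2 : Γ.Adj none (some v) := (hΓ _ _).2 ⟨by simp, Or.inl rfl⟩
    have := Γ.dist_le (Walk.cons h1 (Walk.cons h2 Walk.nil))
    simpa using this
  -- short walks from the center to any vertex, and back
  have L1 : ∀ v : V, ∃ p : (G ⊔ S).Walk none (some v),
      walkWeight Γ (G ⊔ S) p ≤ 3 := by
    intro v
    rcases hdom v with hv | ⟨u, hu, huv⟩
    · have hadj : (G ⊔ S).Adj none (some v) :=
        Or.inr ((hS _ _).2 (Or.inl ⟨rfl, v, hv, rfl⟩))
      refine ⟨Walk.cons hadj Walk.nil, ?_⟩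
      simp only [walkWeight_cons, walkWeight_nil, Nat.add_zero]
      exact le_trans (hd1 v) (by norm_num)
    · have h1 : (G ⊔ S).Adj none (some u) :=
        Or.inr ((hS _ _).2 (Or.inl ⟨rfl, u, hu, rfl⟩))
      have h2 : (G ⊔ S).Adj (some u) (some v) :=
        Or.inl ((hG _ _).2 ⟨u, v, rfl, rfl, huv⟩)
      refine ⟨Walk.cons h1 (Walk.cons h2 Walk.nil), ?_⟩
      simp only [walkWeight_cons, walkWeight_nil, Nat.add_zero]
      have := Nat.add_le_add (hd1 u) (hd2 u v)
      omega
  have L2 : ∀ u : V, ∃ p : (G ⊔ S).Walk (some u) none,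
      walkWeight Γ (G ⊔ S) p ≤ 3 := by
    intro u
    rcases hdom u with hu | ⟨w, hw, hwu⟩
    · have hadj : (G ⊔ S).Adj (some u) none :=
        Or.inr ((hS _ _).2 (Or.inr ⟨rfl, u, hu, rfl⟩))
      refine ⟨Walk.cons hadj Walk.nil, ?_⟩
      simp only [walkWeight_cons, walkWeight_nil, Nat.add_zero]
      exact le_trans (hd1' u) (by norm_num)
    · have h1 : (G ⊔ S).Adj (some u) (some w) :=
        Or.inl ((hG _ _).2 ⟨u, w, rfl, rfl, hwu.symm⟩)
      have h2 : (G ⊔ S).Adj (some w) none :=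
        Or.inr ((hS _ _).2 (Or.inr ⟨rfl, w, hw, rfl⟩))
      refine ⟨Walk.cons h1 (Walk.cons h2 Walk.nil), ?_⟩
      simp only [walkWeight_cons, walkWeight_nil, Nat.add_zero]
      have := Nat.add_le_add (hd2 u w) (hd1' w)
      omega
  constructor
  · intro v
    obtain ⟨p, hp⟩ := L1 v
    exact wdist_le Γ (G ⊔ S) p hp
  · intro u v
    obtain ⟨p, hp⟩ := L2 u
    obtain ⟨q, hq⟩ := L1 v
    refine wdist_le Γ (G ⊔ S) (p.append q) (n := 6) ?_
    rw [walkWeight_append]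
    omega
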